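/- Let P be a poset and G its incomparability graph. For all elements x ≤ u ≤ v ≤ y in P, we have d_G(u, v) ≤ d_G(x, y). -/

import Mathlib

/-! Along a walk from `x` to `y` with `x ≤ u ≤ y`, the first vertex not below `u` is incomparable to
`u` (its predecessor lies below `u` and is incomparable to it); jumping there from `u`
costs one edge, which replaces the steps already taken. Order duality gives the mirror
statement, and chaining the two monotonicity properties proves the theorem. -/

/-- The incomparability graph of a poset: edges are pairs of incomparable elements. -/
def incompGraph (V : Type*) [PartialOrder V] : SimpleGraph V where
  Adj a b := ¬ a ≤ b ∧ ¬ b ≤ a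
  symm := ⟨fun a b h => by exact ⟨h.2, h.1⟩⟩
  loopless := ⟨fun a h => by exact h.1 le_rfl⟩

namespace incompGraph

variable {V : Type*} [PartialOrder V]

theorem edist_le_length_of_le_of_le {x y : V} (p : (incompGraph V).Walk x y) {u : V}
    (hxu : x ≤ u) (huy : u ≤ y) : (incompGraph V).edist u y ≤ p.length := by
  induction p with
  | nil => simp [le_antisymm huy hxu]
  | @cons a b c hab q ih =>
    rw [SimpleGraph.Walk.length_cons, Nat.cast_succ]
    by_cases hbu : b ≤ u
    · exact (ih hbu huy).trans le_self_add
    · have hadj : (incompGraph V).Adj u b := ⟨fun hub => hab.1 (hxu.trans hub), hbu⟩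
      calc (incompGraph V).edist u c
          ≤ (incompGraph V).edist u b + (incompGraph V).edist b c :=
            (incompGraph V).edist_triangle
        _ ≤ 1 + q.length := by
            gcongr
            · exact (SimpleGraph.edist_eq_one_iff_adj.mpr hadj).le
            · exact q.edist_le
        _ = q.length + 1 := add_comm _ _

theorem edist_le_edist_of_le_left {x u y : V} (hxu : x ≤ u) (huy : u ≤ y) :
    (incompGraph V).edist u y ≤ (incompGraph V).edist x y :=
  le_iInf fun p => edist_le_length_of_le_of_le p hxu huy

theorem orderDual : incompGraph Vᵒᵈ = incompGraph V := by
  ext a b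
  exact and_comm

theorem edist_le_edist_of_le_right {x u y : V} (hxu : x ≤ u) (huy : u ≤ y) :
    (incompGraph V).edist x u ≤ (incompGraph V).edist x y := by
  have := edist_le_edist_of_le_left (V := Vᵒᵈ) (OrderDual.toDual_le_toDual.mpr huy)
    (OrderDual.toDual_le_toDual.mpr hxu)
  rw [orderDual] at this
  rw [SimpleGraph.edist_comm, SimpleGraph.edist_comm (u := x)]
  exact this

end incompGraph

theorem stmt8 {V : Type*} [PartialOrder V] (x u v y : V)
    (hxu : x ≤ u) (huv : u ≤ v) (hvy : v ≤ y) :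
    (incompGraph V).edist u v ≤ (incompGraph V).edist x y :=
  (incompGraph.edist_le_edist_of_le_right huv hvy).trans
    (incompGraph.edist_le_edist_of_le_left hxu (huv.trans hvy))
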